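/- Let F : C → D and U : D → C be an adjoint pair of functors with natural bijection Φ : D(FX, Y) → C(X, UY), where C and D have finite coproducts, and let T be a guarded iterative monad on D. Then the monad induced on the composite functor UTF is guarded iterative, with guardedness defined by: f : X → UTFY is σ-guarded iff Φ⁻¹(f) : FX → TFY is (Fσ)-guarded; the unique solution of an inr-guarded f : X → UTF(Y+X) is Φ((Φ⁻¹f)†). -/

import Mathlib

open CategoryTheory CategoryTheory.Limits

universe v u

/-- `(σ, σ')` form a binary coproduct cospan, i.e. a summand together with its complement. -/
def IsCoprodCospan {C : Type u} [Category.{v} C] {Y' Y'' Y : C}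
    (σ : Y' ⟶ Y) (σ' : Y'' ⟶ Y) : Prop :=
  Nonempty (IsColimit (BinaryCofan.mk σ σ'))

/-- A monad on `C`, presented as a Kleisli triple. -/
structure KMonad (C : Type u) [Category.{v} C] where
  obj : C → C
  η : ∀ X : C, X ⟶ obj X
  bind : ∀ {X Y : C}, (X ⟶ obj Y) → (obj X ⟶ obj Y)
  η_bind : ∀ {X Y : C} (f : X ⟶ obj Y), η X ≫ bind f = f
  bind_η : ∀ X : C, bind (η X) = 𝟙 (obj X)
  bind_comp : ∀ {X Y Z : C} (f : X ⟶ obj Y) (g : Y ⟶ obj Z),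
      bind (f ≫ bind g) = bind f ≫ bind g

/-- An abstractly guarded monad: its Kleisli category carries a notion of abstract
guardedness, i.e. a relation `guarded f σ σ'` between Kleisli morphisms
`f : X ⟶ obj Y` and summands `σ : Y' ⟶ Y` (with chosen complement `σ' : Y'' ⟶ Y`)
closed under the rules (trv), (par) and (cmp), where the coproducts in the Kleisli
category are inherited from `C` (with injections `η ∘ inj`). -/
structure GMonad (C : Type u) [Category.{v} C] extends KMonad C where
  guarded : ∀ {X Y' Y'' Y : C}, (X ⟶ obj Y) → (Y' ⟶ Y) → (Y'' ⟶ Y) → Prop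
  trv : ∀ {X Y Z P : C} (i₁ : Y ⟶ P) (i₂ : Z ⟶ P), IsCoprodCospan i₁ i₂ →
      ∀ f : X ⟶ obj Y, guarded (f ≫ bind (i₁ ≫ η P)) i₂ i₁
  par : ∀ {X Y P Z' Z'' Z : C} (j₁ : X ⟶ P) (j₂ : Y ⟶ P), IsCoprodCospan j₁ j₂ →
      ∀ (σ : Z' ⟶ Z) (σ' : Z'' ⟶ Z) (u : P ⟶ obj Z),
      guarded (j₁ ≫ u) σ σ' → guarded (j₂ ≫ u) σ σ' → guarded u σ σ'
  cmp : ∀ {X Y Z P V' V'' V : C} (i₁ : Y ⟶ P) (i₂ : Z ⟶ P), IsCoprodCospan i₁ i₂ →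
      ∀ (σ : V' ⟶ V) (σ' : V'' ⟶ V) (f : X ⟶ obj P) (u : P ⟶ obj V),
      guarded f i₂ i₁ → guarded (i₁ ≫ u) σ σ' → guarded (f ≫ bind u) σ σ'

/-- A guarded pre-iterative monad: every `inr`-guarded `f : X ⟶ T(Y+X)` has a chosen
solution `iter f hf` satisfying the fixpoint identity `f† = [η, f†]* ∘ f`. -/
structure PIMonad (C : Type u) [Category.{v} C] [HasBinaryCoproducts C]
    extends GMonad C where
  iter : ∀ {X Y : C} (f : X ⟶ obj (Y ⨿ X)),
      guarded f (coprod.inr : X ⟶ Y ⨿ X) coprod.inl → (X ⟶ obj Y)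
  iter_fixpoint : ∀ {X Y : C} (f : X ⟶ obj (Y ⨿ X))
      (hf : guarded f (coprod.inr : X ⟶ Y ⨿ X) coprod.inl),
      iter f hf = f ≫ bind (coprod.desc (η Y) (iter f hf))

/-- A guarded iterative monad: solutions of `inr`-guarded morphisms are unique. -/
structure IMonad (C : Type u) [Category.{v} C] [HasBinaryCoproducts C]
    extends PIMonad C where
  iter_unique : ∀ {X Y : C} (f : X ⟶ obj (Y ⨿ X))
      (hf : guarded f (coprod.inr : X ⟶ Y ⨿ X) coprod.inl) (s : X ⟶ obj Y),
      s = f ≫ bind (coprod.desc (η Y) s) → s = iter f hf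

/-- A monad morphism, in Kleisli-triple form. -/
structure KMonadHom {C : Type u} [Category.{v} C] (T S : KMonad C) where
  app : ∀ X : C, T.obj X ⟶ S.obj X
  app_η : ∀ X : C, T.η X ≫ app X = S.η X
  app_bind : ∀ (X Y : C) (f : X ⟶ T.obj Y),
      T.bind f ≫ app Y = app X ≫ S.bind (f ≫ app Y)

universe v₂ u₂

section Sandwich

variable {C : Type u} {D : Type u₂} [Category.{v} C] [Category.{v₂} D]
  [HasBinaryCoproducts C] [HasBinaryCoproducts D]

/-- The underlying object assignment of the sandwiched monad `UTF`. -/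
def sandObj (U : D ⥤ C) (T : KMonad D) (F : C ⥤ D) (X : C) : C :=
  U.obj (T.obj (F.obj X))

/-- The unit of the sandwiched monad `UTF`. -/
def sandEta (F : C ⥤ D) (U : D ⥤ C) (adj : F ⊣ U) (T : KMonad D) (X : C) :
    X ⟶ sandObj U T F X :=
  adj.unit.app X ≫ U.map (T.η (F.obj X))

/-- The Kleisli lifting of the sandwiched monad `UTF`. -/
def sandBind (F : C ⥤ D) (U : D ⥤ C) (adj : F ⊣ U) (T : KMonad D) {X Y : C}
    (k : X ⟶ sandObj U T F Y) : sandObj U T F X ⟶ sandObj U T F Y :=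
  U.map (T.bind ((adj.homEquiv X (T.obj (F.obj Y))).symm k))

/-- The canonical inverse `F(Y + X) ⟶ FY + FX` of the coproduct comparison
(left adjoints preserve coproducts). -/
noncomputable def cmpInv (F : C ⥤ D) (U : D ⥤ C) (adj : F ⊣ U) (Y X : C) :
    F.obj (Y ⨿ X) ⟶ F.obj Y ⨿ F.obj X :=
  (adj.homEquiv (Y ⨿ X) (F.obj Y ⨿ F.obj X)).symm
    (coprod.desc (adj.unit.app Y ≫ U.map coprod.inl)
      (adj.unit.app X ≫ U.map coprod.inr))

/-- The sandwiched guardedness relation: `f : X ⟶ UTFY` is `σ`-guarded iff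
`Φ⁻¹(f) : FX ⟶ TFY` is `Fσ`-guarded (with complement `Fσ'`). -/
def sandGuarded (F : C ⥤ D) (U : D ⥤ C) (adj : F ⊣ U) (T : GMonad D)
    {X Y' Y'' Y : C} (f : X ⟶ sandObj U T.toKMonad F Y)
    (σ : Y' ⟶ Y) (σ' : Y'' ⟶ Y) : Prop :=
  T.guarded ((adj.homEquiv X (T.obj (F.obj Y))).symm f) (F.map σ) (F.map σ')

end Sandwich

/-! Transposition `Φ⁻¹` along `F ⊣ U` turns Kleisli composition of `UTF` into that of `T`,
`Φ⁻¹(f ≫ k*) = Φ⁻¹ f ≫ (Φ⁻¹ k)*`, and takes the unit of `UTF` to `η`, while the left adjoint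
`F` preserves the coproduct cospans that guardedness refers to. Hence each of (trv), (par),
(cmp) for `UTF` is the same rule for `T` applied to transposes. Once `F(Y + X)` is split as
`FY + FX`, the fixpoint equation of `f` at `s : X ⟶ UTFY` transposes to the fixpoint equation
of (the split) `Φ⁻¹ f` at `Φ⁻¹ s`, so existence and uniqueness of solutions transfer from `T`. -/

lemma IsCoprodCospan.map {C : Type u} {D : Type u₂} [Category.{v} C] [Category.{v₂} D]
    {Y' Y'' Y : C} {σ : Y' ⟶ Y} {σ' : Y'' ⟶ Y} (h : IsCoprodCospan σ σ') (F : C ⥤ D)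
    [PreservesColimitsOfShape (Discrete WalkingPair) F] :
    IsCoprodCospan (F.map σ) (F.map σ') :=
  h.elim fun hc => ⟨isColimitMapCoconeBinaryCofanEquiv F σ σ' (isColimitOfPreserves F hc)⟩

lemma CategoryTheory.Adjunction.isCoprodCospan_map {C : Type u} {D : Type u₂}
    [Category.{v} C] [Category.{v₂} D] {F : C ⥤ D} {U : D ⥤ C} (adj : F ⊣ U)
    {Y' Y'' Y : C} {σ : Y' ⟶ Y} {σ' : Y'' ⟶ Y} (h : IsCoprodCospan σ σ') :
    IsCoprodCospan (F.map σ) (F.map σ') :=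
  have : PreservesColimitsOfSize.{0, 0} F := adj.leftAdjoint_preservesColimits
  h.map F

section Transpose

variable {C : Type u} {D : Type u₂} [Category.{v} C] [Category.{v₂} D]
  {F : C ⥤ D} {U : D ⥤ C} (adj : F ⊣ U)

lemma homEquiv_symm_comp_sandBind (T : KMonad D) {X Y Z : C} (f : X ⟶ sandObj U T F Y)
    (k : Y ⟶ sandObj U T F Z) :
    (adj.homEquiv X (T.obj (F.obj Z))).symm (f ≫ sandBind F U adj T k) =
      (adj.homEquiv X (T.obj (F.obj Y))).symm f ≫
        T.bind ((adj.homEquiv Y (T.obj (F.obj Z))).symm k) :=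
  adj.homEquiv_naturality_right_symm _ _

lemma homEquiv_symm_sandEta (T : KMonad D) (X : C) :
    (adj.homEquiv X (T.obj (F.obj X))).symm (sandEta F U adj T X) = T.η (F.obj X) :=
  (Equiv.symm_apply_eq _).2 (adj.homEquiv_unit _ _ _).symm

lemma homEquiv_symm_coprod_desc [HasBinaryCoproducts C] [HasBinaryCoproducts D] {Y X : C}
    {Z : D} (a : Y ⟶ U.obj Z) (b : X ⟶ U.obj Z) :
    (adj.homEquiv (Y ⨿ X) Z).symm (coprod.desc a b) =
      cmpInv F U adj Y X ≫
        coprod.desc ((adj.homEquiv Y Z).symm a) ((adj.homEquiv X Z).symm b) := by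
  rw [Equiv.symm_apply_eq, Adjunction.homEquiv_naturality_right, cmpInv,
    Equiv.apply_symm_apply]
  ext
  · rw [coprod.inl_desc, coprod.inl_desc_assoc, Category.assoc, ← U.map_comp,
      coprod.inl_desc, ← Adjunction.homEquiv_unit, Equiv.apply_symm_apply]
  · rw [coprod.inr_desc, coprod.inr_desc_assoc, Category.assoc, ← U.map_comp,
      coprod.inr_desc, ← Adjunction.homEquiv_unit, Equiv.apply_symm_apply]

end Transpose

section Guardedness

variable {C : Type u} {D : Type u₂} [Category.{v} C] [Category.{v₂} D]
  {F : C ⥤ D} {U : D ⥤ C} (adj : F ⊣ U) (T : GMonad D)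

lemma sandGuarded_trv {X Y Z V : C} (i₁ : Y ⟶ V) (i₂ : Z ⟶ V) (hi : IsCoprodCospan i₁ i₂)
    (f : X ⟶ sandObj U T.toKMonad F Y) :
    sandGuarded F U adj T
      (f ≫ sandBind F U adj T.toKMonad (i₁ ≫ sandEta F U adj T.toKMonad V)) i₂ i₁ := by
  unfold sandGuarded
  erw [homEquiv_symm_comp_sandBind, adj.homEquiv_naturality_left_symm,
    homEquiv_symm_sandEta]
  exact T.trv _ _ (adj.isCoprodCospan_map hi) _

lemma sandGuarded_par {X Y V Z' Z'' Z : C} (j₁ : X ⟶ V) (j₂ : Y ⟶ V)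
    (hj : IsCoprodCospan j₁ j₂) (σ : Z' ⟶ Z) (σ' : Z'' ⟶ Z)
    (u : V ⟶ sandObj U T.toKMonad F Z)
    (h₁ : sandGuarded F U adj T (j₁ ≫ u) σ σ') (h₂ : sandGuarded F U adj T (j₂ ≫ u) σ σ') :
    sandGuarded F U adj T u σ σ' := by
  unfold sandGuarded at h₁ h₂
  erw [adj.homEquiv_naturality_left_symm] at h₁ h₂
  exact T.par _ _ (adj.isCoprodCospan_map hj) _ _ _ h₁ h₂

lemma sandGuarded_cmp {X Y Z V W' W'' W : C} (i₁ : Y ⟶ V) (i₂ : Z ⟶ V)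
    (hi : IsCoprodCospan i₁ i₂) (σ : W' ⟶ W) (σ' : W'' ⟶ W)
    (f : X ⟶ sandObj U T.toKMonad F V) (u : V ⟶ sandObj U T.toKMonad F W)
    (hf : sandGuarded F U adj T f i₂ i₁) (hu : sandGuarded F U adj T (i₁ ≫ u) σ σ') :
    sandGuarded F U adj T (f ≫ sandBind F U adj T.toKMonad u) σ σ' := by
  unfold sandGuarded at hu ⊢
  erw [adj.homEquiv_naturality_left_symm] at hu
  erw [homEquiv_symm_comp_sandBind]
  exact T.cmp _ _ (adj.isCoprodCospan_map hi) _ _ _ _ hf hu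

end Guardedness

section Iteration

variable {C : Type u} {D : Type u₂} [Category.{v} C] [Category.{v₂} D]
  [HasBinaryCoproducts C] [HasBinaryCoproducts D] {F : C ⥤ D} {U : D ⥤ C} (adj : F ⊣ U)

noncomputable def transposeSplit (T : KMonad D) {X Y : C} (f : X ⟶ sandObj U T F (Y ⨿ X)) :
    F.obj X ⟶ T.obj (F.obj Y ⨿ F.obj X) :=
  (adj.homEquiv X (T.obj (F.obj (Y ⨿ X)))).symm f ≫
    T.bind (cmpInv F U adj Y X ≫ T.η (F.obj Y ⨿ F.obj X))

lemma homEquiv_symm_comp_sandBind_desc (T : KMonad D) {X Y : C}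
    (f : X ⟶ sandObj U T F (Y ⨿ X)) (s : X ⟶ sandObj U T F Y) :
    (adj.homEquiv X (T.obj (F.obj Y))).symm
        (f ≫ sandBind F U adj T (coprod.desc (sandEta F U adj T Y) s)) =
      transposeSplit adj T f ≫
        T.bind (coprod.desc (T.η (F.obj Y)) ((adj.homEquiv X (T.obj (F.obj Y))).symm s)) := by
  rw [homEquiv_symm_comp_sandBind]
  erw [homEquiv_symm_coprod_desc, homEquiv_symm_sandEta]
  rw [transposeSplit, Category.assoc, ← T.bind_comp, Category.assoc, T.η_bind]

lemma sandBind_fixpoint_iff (T : KMonad D) {X Y : C} (f : X ⟶ sandObj U T F (Y ⨿ X))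
    (s : X ⟶ sandObj U T F Y) :
    s = f ≫ sandBind F U adj T (coprod.desc (sandEta F U adj T Y) s) ↔
      (adj.homEquiv X (T.obj (F.obj Y))).symm s = transposeSplit adj T f ≫
        T.bind (coprod.desc (T.η (F.obj Y)) ((adj.homEquiv X (T.obj (F.obj Y))).symm s)) :=
  (adj.homEquiv X (T.obj (F.obj Y))).symm.injective.eq_iff.symm.trans
    (Eq.congr_right (homEquiv_symm_comp_sandBind_desc adj T f s))

lemma homEquiv_iter_transposeSplit_fixpoint (T : PIMonad D) {X Y : C}
    (f : X ⟶ sandObj U T.toKMonad F (Y ⨿ X))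
    (hf : T.guarded (transposeSplit adj T.toKMonad f) coprod.inr coprod.inl) :
    adj.homEquiv X (T.obj (F.obj Y)) (T.iter _ hf) =
      f ≫ sandBind F U adj T.toKMonad (coprod.desc (sandEta F U adj T.toKMonad Y)
        (adj.homEquiv X (T.obj (F.obj Y)) (T.iter _ hf))) :=
  (sandBind_fixpoint_iff adj _ f _).2 <| by
    rw [Equiv.symm_apply_apply]
    exact T.iter_fixpoint _ hf

lemma eq_homEquiv_iter_transposeSplit (T : IMonad D) {X Y : C}
    (f : X ⟶ sandObj U T.toKMonad F (Y ⨿ X))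
    (hf : T.guarded (transposeSplit adj T.toKMonad f) coprod.inr coprod.inl)
    (s : X ⟶ sandObj U T.toKMonad F Y)
    (hs : s = f ≫ sandBind F U adj T.toKMonad (coprod.desc (sandEta F U adj T.toKMonad Y) s)) :
    s = adj.homEquiv X (T.obj (F.obj Y)) (T.iter _ hf) :=
  (Equiv.symm_apply_eq _).1 (T.iter_unique _ hf _ ((sandBind_fixpoint_iff adj _ f s).1 hs))

end Iteration

section Sandwich

variable {C : Type u} {D : Type u₂} [Category.{v} C] [Category.{v₂} D]
  [HasBinaryCoproducts C] [HasBinaryCoproducts D]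

/-- for an adjunction `F ⊣ U` and a guarded iterative monad `T` on `D`,
the monad induced on `UTF` is guarded iterative with the guardedness relation
`f` `σ`-guarded iff `Φ⁻¹(f)` `(Fσ)`-guarded, and with unique solutions given by
`f ↦ Φ((Φ⁻¹ f)†)`. -/
theorem sandwich_guarded_iterative (F : C ⥤ D) (U : D ⥤ C) (adj : F ⊣ U)
    (T : IMonad D) :
    -- the sandwiched guardedness satisfies (trv):
    (∀ (X Y Z V : C) (i₁ : Y ⟶ V) (i₂ : Z ⟶ V), IsCoprodCospan i₁ i₂ →
      ∀ f : X ⟶ sandObj U T.toKMonad F Y,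
        sandGuarded F U adj T.toGMonad
          (f ≫ sandBind F U adj T.toKMonad (i₁ ≫ sandEta F U adj T.toKMonad V))
          i₂ i₁) ∧
    -- (par):
    (∀ (X Y V Z' Z'' Z : C) (j₁ : X ⟶ V) (j₂ : Y ⟶ V), IsCoprodCospan j₁ j₂ →
      ∀ (σ : Z' ⟶ Z) (σ' : Z'' ⟶ Z) (u : V ⟶ sandObj U T.toKMonad F Z),
        sandGuarded F U adj T.toGMonad (j₁ ≫ u) σ σ' →
        sandGuarded F U adj T.toGMonad (j₂ ≫ u) σ σ' →
        sandGuarded F U adj T.toGMonad u σ σ') ∧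
    -- (cmp):
    (∀ (X Y Z V W' W'' W : C) (i₁ : Y ⟶ V) (i₂ : Z ⟶ V), IsCoprodCospan i₁ i₂ →
      ∀ (σ : W' ⟶ W) (σ' : W'' ⟶ W) (f : X ⟶ sandObj U T.toKMonad F V)
        (u : V ⟶ sandObj U T.toKMonad F W),
        sandGuarded F U adj T.toGMonad f i₂ i₁ →
        sandGuarded F U adj T.toGMonad (i₁ ≫ u) σ σ' →
        sandGuarded F U adj T.toGMonad (f ≫ sandBind F U adj T.toKMonad u) σ σ') ∧
    -- every inr-guarded `f` has the unique solution `Φ((Φ⁻¹ f)†)`: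
    (∀ (X Y : C) (f : X ⟶ sandObj U T.toKMonad F (Y ⨿ X)),
      sandGuarded F U adj T.toGMonad f (coprod.inr : X ⟶ Y ⨿ X) coprod.inl →
      ∀ hf' : T.guarded ((adj.homEquiv X (T.obj (F.obj (Y ⨿ X)))).symm f ≫
          T.bind (cmpInv F U adj Y X ≫ T.η (F.obj Y ⨿ F.obj X)))
          (coprod.inr : F.obj X ⟶ F.obj Y ⨿ F.obj X) coprod.inl,
      ((adj.homEquiv X (T.obj (F.obj Y)))
          (T.iter ((adj.homEquiv X (T.obj (F.obj (Y ⨿ X)))).symm f ≫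
            T.bind (cmpInv F U adj Y X ≫ T.η (F.obj Y ⨿ F.obj X))) hf') =
        f ≫ sandBind F U adj T.toKMonad
          (coprod.desc (sandEta F U adj T.toKMonad Y)
            ((adj.homEquiv X (T.obj (F.obj Y)))
              (T.iter ((adj.homEquiv X (T.obj (F.obj (Y ⨿ X)))).symm f ≫
                T.bind (cmpInv F U adj Y X ≫ T.η (F.obj Y ⨿ F.obj X))) hf')))) ∧
      (∀ s : X ⟶ sandObj U T.toKMonad F Y,
        s = f ≫ sandBind F U adj T.toKMonad
            (coprod.desc (sandEta F U adj T.toKMonad Y) s) →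
        s = (adj.homEquiv X (T.obj (F.obj Y)))
          (T.iter ((adj.homEquiv X (T.obj (F.obj (Y ⨿ X)))).symm f ≫
            T.bind (cmpInv F U adj Y X ≫ T.η (F.obj Y ⨿ F.obj X))) hf'))) :=
  ⟨fun _ _ _ _ => sandGuarded_trv adj T.toGMonad,
    fun _ _ _ _ _ _ => sandGuarded_par adj T.toGMonad,
    fun _ _ _ _ _ _ _ => sandGuarded_cmp adj T.toGMonad,
    fun _ _ f _ hf' =>
      ⟨homEquiv_iter_transposeSplit_fixpoint adj T.toPIMonad f hf',
        eq_homEquiv_iter_transposeSplit adj T f hf'⟩⟩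

end Sandwich
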